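/- Let S be a read-k, per-read-increasing, k-regularly-interleaving sequence over X = {x_1,...,x_n}, with no upward jumps of size greater than one (i.e., consecutive positions (x_i, x_j) with j > i satisfy j = i+1). Then for every fixed index i ∈ [n], the number of consecutive pairs of positions (ℓ, ℓ+1) in S whose entries are x_h followed by x_j with j < i < h is at most k. -/
import Mathlib


/-- Number of occurrences of the value `S ℓ` strictly before position `ℓ`
(so a first occurrence has `occIdx = 0`). -/
def occIdx {N n : ℕ} (S : Fin N → Fin n) (ℓ : Fin N) : ℕ :=
  (Finset.univ.filter fun p => p < ℓ ∧ S p = S ℓ).card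

/-- `S` is a read-`k` sequence: every element appears exactly `k` times. -/
def ReadK {N n : ℕ} (k : ℕ) (S : Fin N → Fin n) : Prop :=
  ∀ x : Fin n, (Finset.univ.filter fun ℓ => S ℓ = x).card = k

/-- `S` is per-read-increasing: within each read, elements occur in
increasing index order. -/
def PerReadIncr {N n : ℕ} (S : Fin N → Fin n) : Prop :=
  ∀ ℓ ℓ' : Fin N, occIdx S ℓ = occIdx S ℓ' → S ℓ < S ℓ' → ℓ < ℓ'

/-- The subsequence of `i`-th and `j`-th occurrences (`i < j`) is
2-regularly-interleaving: positions split into contiguous element-disjoint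
blocks (given by a monotone block-labelling `B` constant on each element's
relevant occurrences), and within a block all `i`-th occurrences precede
all `j`-th occurrences. -/
def RegIntPair {N n : ℕ} (S : Fin N → Fin n) (i j : ℕ) : Prop :=
  ∃ B : Fin N → ℕ, Monotone B ∧
    (∀ ℓ ℓ' : Fin N, (occIdx S ℓ = i ∨ occIdx S ℓ = j) →
      (occIdx S ℓ' = i ∨ occIdx S ℓ' = j) → S ℓ = S ℓ' → B ℓ = B ℓ') ∧
    (∀ ℓ ℓ' : Fin N, B ℓ = B ℓ' → occIdx S ℓ = j → occIdx S ℓ' = i → ℓ' < ℓ)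

/-- `S` is `k`-regularly-interleaving. -/
def RegIntK {N n : ℕ} (k : ℕ) (S : Fin N → Fin n) : Prop :=
  ∀ i j : ℕ, i < j → j < k → RegIntPair S i j

lemma occIdx_strict {N n : ℕ} (S : Fin N → Fin n) {p q : Fin N}
    (hpq : p < q) (hS : S p = S q) : occIdx S p < occIdx S q := by
  apply Finset.card_lt_card
  rw [Finset.ssubset_iff_of_subset]
  · exact ⟨p, by simp [hpq, hS], by simp⟩
  · intro r hr
    simp only [Finset.mem_filter, Finset.mem_univ, true_and] at hr ⊢
    exact ⟨hr.1.trans hpq, hr.2.trans hS⟩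

lemma occIdx_lt {N n k : ℕ} (S : Fin N → Fin n) (h1 : ReadK k S) (ℓ : Fin N) :
    occIdx S ℓ < k := by
  rw [← h1 (S ℓ)]
  apply Finset.card_lt_card
  rw [Finset.ssubset_iff_of_subset]
  · exact ⟨ℓ, by simp, by simp⟩
  · intro r hr
    simp only [Finset.mem_filter, Finset.mem_univ, true_and] at hr ⊢
    exact hr.2

lemma exists_occ {N n k : ℕ} (S : Fin N → Fin n) (h1 : ReadK k S) (x : Fin n)
    {c : ℕ} (hc : c < k) : ∃ p : Fin N, S p = x ∧ occIdx S p = c := by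
  classical
  have hs := Finset.surj_on_of_inj_on_of_card_le
    (s := Finset.univ.filter fun p : Fin N => S p = x) (t := Finset.range k)
    (fun p _ => occIdx S p)
    (fun p _ => Finset.mem_range.mpr (occIdx_lt S h1 p))
    (fun p q hp hq hpq => by
      simp only [Finset.mem_filter, Finset.mem_univ, true_and] at hp hq
      rcases lt_trichotomy p q with h | h | h
      · exact absurd hpq (Nat.ne_of_lt (occIdx_strict S h (hp.trans hq.symm)))
      · exact h
      · exact absurd hpq.symm (Nat.ne_of_lt (occIdx_strict S h (hq.trans hp.symm))))
    (by rw [h1 x, Finset.card_range])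
  obtain ⟨p, hp, hpc⟩ := hs c (Finset.mem_range.mpr hc)
  simp only [Finset.mem_filter, Finset.mem_univ, true_and] at hp
  exact ⟨p, hp, hpc.symm⟩

lemma ivt {N n : ℕ} (S : Fin N → Fin n)
    (hnojump : ∀ ℓ ℓ' : Fin N, (ℓ' : ℕ) = (ℓ : ℕ) + 1 → S ℓ < S ℓ' →
      ((S ℓ') : ℕ) = (S ℓ : ℕ) + 1)
    {a b : Fin N} {i : Fin n} (hab : a ≤ b) (ha : S a < i) (hb : i < S b) :
    ∃ p : Fin N, a ≤ p ∧ p ≤ b ∧ S p = i := by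
  classical
  set D := Finset.univ.filter (fun p : Fin N => a ≤ p ∧ p ≤ b ∧ S p < i) with hD
  have hne : D.Nonempty := ⟨a, by simp [hD, hab, ha]⟩
  set q := D.max' hne with hq'
  have hq : a ≤ q ∧ q ≤ b ∧ S q < i := (Finset.mem_filter.mp (D.max'_mem hne)).2
  have hqb : q < b := lt_of_le_of_ne hq.2.1 (fun h =>
    absurd hb (not_lt.mpr (le_of_lt (h ▸ hq.2.2))))
  have hq1 : (q : ℕ) + 1 < N := lt_of_le_of_lt (Nat.succ_le_of_lt hqb) b.isLt
  set q1 : Fin N := ⟨(q : ℕ) + 1, hq1⟩ with hq1def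
  have hqq1 : q < q1 := by simp [Fin.lt_def, hq1def]
  have hq1b : q1 ≤ b := by
    simp only [Fin.le_def, hq1def]
    exact Nat.succ_le_of_lt hqb
  have hq1notD : q1 ∉ D := fun h => absurd (Finset.le_max' D q1 h) (not_le.mpr hqq1)
  have hSq1 : ¬ S q1 < i := by
    intro h
    exact hq1notD (by simp [hD]; exact ⟨le_trans hq.1 (le_of_lt hqq1), hq1b, h⟩)
  by_cases hup : S q < S q1
  · have hj := hnojump q q1 rfl hup
    refine ⟨q1, le_trans hq.1 (le_of_lt hqq1), hq1b, ?_⟩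
    have h1 : (S q1 : ℕ) ≤ (i : ℕ) := by
      have : (S q : ℕ) < (i : ℕ) := hq.2.2
      omega
    have h2 : (i : ℕ) ≤ (S q1 : ℕ) := not_lt.mp hSq1
    exact Fin.ext (le_antisymm h1 h2)
  · exact absurd (lt_of_le_of_lt (not_lt.mp hup) hq.2.2) hSq1

/-- Core counting step of Lemma 3.2: in a read-`k`, per-read-increasing,
`k`-regularly-interleaving sequence with no upward jumps, for each fixed
index `i` there are at most `k` consecutive pairs of positions whose entries
jump downward over `i`. -/
theorem stmt_6 {n k : ℕ} (S : Fin (k * n) → Fin n)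
    (h1 : ReadK k S) (h2 : PerReadIncr S) (h3 : RegIntK k S)
    (hnojump : ∀ ℓ ℓ' : Fin (k * n), (ℓ' : ℕ) = (ℓ : ℕ) + 1 → S ℓ < S ℓ' →
      ((S ℓ') : ℕ) = (S ℓ : ℕ) + 1)
    (i : Fin n) :
    (Finset.univ.filter fun ℓ : Fin (k * n) =>
      ∃ ℓ' : Fin (k * n), (ℓ' : ℕ) = (ℓ : ℕ) + 1 ∧ S ℓ' < i ∧ i < S ℓ).card ≤ k := by
  classical
  set C := Finset.univ.filter fun ℓ : Fin (k * n) =>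
      ∃ ℓ' : Fin (k * n), (ℓ' : ℕ) = (ℓ : ℕ) + 1 ∧ S ℓ' < i ∧ i < S ℓ with hC
  set T := Finset.univ.filter fun p : Fin (k * n) => S p = i with hT
  -- existence of an occurrence of i at or before any crossing
  have key : ∀ ℓ ∈ C, (Finset.univ.filter fun p : Fin (k * n) => p ≤ ℓ ∧ S p = i).Nonempty := by
    intro ℓ hℓ
    simp only [hC, Finset.mem_filter, Finset.mem_univ, true_and] at hℓ
    obtain ⟨ℓ', _, _, hiℓ⟩ := hℓ
    obtain ⟨p, hpS, hpc⟩ := exists_occ S h1 i (occIdx_lt S h1 ℓ)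
    have hplt : p < ℓ := h2 p ℓ (by rw [hpc]) (by rw [hpS]; exact hiℓ)
    exact ⟨p, by simp [hplt.le, hpS]⟩
  set f : Fin (k * n) → Fin (k * n) := fun ℓ =>
    if h : (Finset.univ.filter fun p : Fin (k * n) => p ≤ ℓ ∧ S p = i).Nonempty
    then (Finset.univ.filter fun p : Fin (k * n) => p ≤ ℓ ∧ S p = i).max' h else ℓ with hf
  have hfprop : ∀ ℓ ∈ C, f ℓ ≤ ℓ ∧ S (f ℓ) = i ∧
      ∀ p : Fin (k * n), p ≤ ℓ → S p = i → p ≤ f ℓ := by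
    intro ℓ hℓ
    have hne := key ℓ hℓ
    have hmem := Finset.max'_mem _ hne
    simp only [Finset.mem_filter, Finset.mem_univ, true_and] at hmem
    refine ⟨?_, ?_, ?_⟩
    · rw [hf]; simp only [dif_pos hne]; exact hmem.1
    · rw [hf]; simp only [dif_pos hne]; exact hmem.2
    · intro p hp hpS
      rw [hf]; simp only [dif_pos hne]
      exact Finset.le_max' _ p (by simp [hp, hpS])
  -- strict monotonicity of f on C
  have hmono : ∀ ℓ₁ ∈ C, ∀ ℓ₂ ∈ C, ℓ₁ < ℓ₂ → f ℓ₁ < f ℓ₂ := by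
    intro ℓ₁ hℓ₁ ℓ₂ hℓ₂ h12
    have hp₁ := hfprop ℓ₁ hℓ₁
    have hp₂ := hfprop ℓ₂ hℓ₂
    have hℓ₁' := hℓ₁
    simp only [hC, Finset.mem_filter, Finset.mem_univ, true_and] at hℓ₁'
    obtain ⟨ℓ₁', hval, hlow, _⟩ := hℓ₁'
    have hℓ₂' := hℓ₂
    simp only [hC, Finset.mem_filter, Finset.mem_univ, true_and] at hℓ₂'
    obtain ⟨_, _, _, hhigh⟩ := hℓ₂'
    have hab : ℓ₁' ≤ ℓ₂ := by
      rw [Fin.le_def, hval]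
      exact Nat.succ_le_of_lt h12
    obtain ⟨p, hap, hpb, hpS⟩ := ivt S hnojump hab hlow hhigh
    have h1' : f ℓ₁ < p := lt_of_le_of_lt hp₁.1 (lt_of_lt_of_le (by rw [Fin.lt_def, hval]; omega) hap)
    exact lt_of_lt_of_le h1' (hp₂.2.2 p hpb hpS)
  have hinj : Set.InjOn f C := by
    intro ℓ₁ hℓ₁ ℓ₂ hℓ₂ hf12
    rcases lt_trichotomy ℓ₁ ℓ₂ with h | h | h
    · exact absurd hf12 (ne_of_lt (hmono ℓ₁ hℓ₁ ℓ₂ hℓ₂ h))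
    · exact h
    · exact absurd hf12.symm (ne_of_lt (hmono ℓ₂ hℓ₂ ℓ₁ hℓ₁ h))
  have hmaps : ∀ ℓ ∈ C, f ℓ ∈ T := by
    intro ℓ hℓ
    simp only [hT, Finset.mem_filter, Finset.mem_univ, true_and]
    exact (hfprop ℓ hℓ).2.1
  have := Finset.card_le_card_of_injOn f hmaps hinj
  rwa [show T.card = k from h1 i] at this
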